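/- Let f, b : (Fin N → ℤ) → WithBot ℕ have finite supports F and B, with umbra indicators u_f and u_b and their discrete linear convolution u_f ⋆ u_b. Then for every x lying in the Minkowski sum F + B = {x_F + x_B | x_F ∈ F, x_B ∈ B}, the dilation value is recovered by (f ⊕ b)(x) = the greatest t ∈ ℕ such that (u_f ⋆ u_b)(x, t) ≥ 1, where (f ⊕ b)(x) = sup_{y} ( f(x − y) + b(y) ) in WithBot ℕ. -/

import Mathlib

open scoped Pointwise

open scoped Classical in
/-- The umbra indicator of an image `f : ℤ^N → WithBot ℕ`: `u_f (x, t) = 1` if `t ≥ 0`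
and `f x` equals the natural number `t`, and `0` otherwise. -/
noncomputable def umbra {N : ℕ} (f : (Fin N → ℤ) → WithBot ℕ) :
    (Fin N → ℤ) × ℤ → ℝ :=
  fun p => if ∃ n : ℕ, (n : ℤ) = p.2 ∧ f p.1 = (n : WithBot ℕ) then 1 else 0

/-- Discrete linear convolution of functions on `ℤ^N × ℤ`:
`(u ⋆ v)(x, t) = ∑_{y, s} u (x - y, t - s) * v (y, s)`. -/
noncomputable def conv {N : ℕ} (u v : (Fin N → ℤ) × ℤ → ℝ) :
    (Fin N → ℤ) × ℤ → ℝ :=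
  fun p => ∑ᶠ (y : Fin N → ℤ), ∑ᶠ (s : ℤ), u (p.1 - y, p.2 - s) * v (y, s)
/-! Put `g y = f (x - y) + b y`. In the `y`-th term of `(u_f ⋆ u_b)(x, t)` the sum over `s` collapses
onto the single height `s = b y`, leaving the umbra indicator of `g` at `(y, t)`; so
`(u_f ⋆ u_b)(x, t) ≥ 1` exactly when `g` takes the value `t`. Since `g` is `⊥` outside the finite
support of `b`, and not identically `⊥` when `x ∈ F + B`, its supremum is its largest value. -/

section Umbra

variable {N : ℕ}

lemma umbra_of_eq_bot {f : (Fin N → ℤ) → WithBot ℕ} {x : Fin N → ℤ} (hx : f x = ⊥) (t : ℤ) :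
    umbra f (x, t) = 0 := by
  simp [umbra, hx]

lemma umbra_of_eq_natCast {f : (Fin N → ℤ) → WithBot ℕ} {x : Fin N → ℤ} {m : ℕ} (hx : f x = m)
    (t : ℤ) : umbra f (x, t) = if (m : ℤ) = t then 1 else 0 := by
  simp [umbra, hx]

lemma finsum_umbra_mul_umbra (f b : (Fin N → ℤ) → WithBot ℕ) (x y : Fin N → ℤ) (t : ℤ) :
    ∑ᶠ s : ℤ, umbra f (x - y, t - s) * umbra b (y, s) =
      umbra (fun y => f (x - y) + b y) (y, t) := by
  set g := fun y => f (x - y) + b y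
  cases hb : b y using WithBot.recBotCoe with
  | bot =>
    have hg : g y = ⊥ := by simp [g, hb]
    simp [umbra_of_eq_bot hb, umbra_of_eq_bot hg]
  | coe k =>
    rw [finsum_eq_single _ (k : ℤ) fun s hs => by simp [umbra_of_eq_natCast hb, Ne.symm hs],
      umbra_of_eq_natCast hb, if_pos rfl, mul_one]
    cases hf : f (x - y) using WithBot.recBotCoe with
    | bot =>
      have hg : g y = ⊥ := by simp [g, hf]
      simp [umbra_of_eq_bot hf, umbra_of_eq_bot hg]
    | coe m =>
      have hg : g y = ↑(m + k) := by simp only [g, hf, hb]; rfl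
      rw [umbra_of_eq_natCast hf, umbra_of_eq_natCast hg]
      congr 1
      simp only [eq_iff_iff]
      omega

lemma conv_umbra_eq_finsum (f b : (Fin N → ℤ) → WithBot ℕ) (x : Fin N → ℤ) (t : ℤ) :
    conv (umbra f) (umbra b) (x, t) = ∑ᶠ y, umbra (fun y => f (x - y) + b y) (y, t) :=
  finsum_congr fun y => finsum_umbra_mul_umbra f b x y t

lemma one_le_finsum_umbra_iff {f : (Fin N → ℤ) → WithBot ℕ} (hf : {x | f x ≠ ⊥}.Finite) (t : ℕ) :
    1 ≤ ∑ᶠ x, umbra f (x, t) ↔ ∃ x, f x = t := by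
  constructor
  · intro h
    by_contra! hnone
    have hzero : ∀ x, umbra f (x, t) = 0 := fun x => by simp [umbra, hnone x]
    simp only [hzero, finsum_zero] at h
    norm_num at h
  · rintro ⟨x, hx⟩
    have hsupp : (Function.support fun x => umbra f (x, t)).Finite :=
      hf.subset fun x hx hfx => hx (umbra_of_eq_bot hfx t)
    calc (1 : ℝ) = umbra f (x, t) := by simp [umbra_of_eq_natCast hx]
      _ ≤ ∑ᶠ x, umbra f (x, t) :=
        single_le_finsum x hsupp fun x => by unfold umbra; split_ifs <;> norm_num

end Umbra

theorem WithBot.exists_iSup_eq_natCast_isGreatest {ι : Type*} {g : ι → WithBot ℕ}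
    (hg : {i | g i ≠ ⊥}.Finite) (hne : ∃ i, g i ≠ ⊥) :
    ∃ n : ℕ, ⨆ i, g i = n ∧ IsGreatest {t : ℕ | ∃ i, g i = t} n := by
  obtain ⟨i₀, hi₀, hmax⟩ := Set.exists_max_image _ g hg hne
  have hle : ∀ i, g i ≤ g i₀ := fun i => by
    by_cases hi : g i = ⊥
    · simp [hi]
    · exact hmax i hi
  obtain ⟨n, hn⟩ := WithBot.ne_bot_iff_exists.mp hi₀
  refine ⟨n, ?_, ⟨i₀, hn.symm⟩, ?_⟩
  · rw [Nat.cast_withBot, hn]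
    exact IsGreatest.csSup_eq ⟨⟨i₀, rfl⟩, Set.forall_mem_range.mpr hle⟩
  · rintro t ⟨i, hi⟩
    have hti := hle i
    rw [hi, ← hn] at hti
    exact WithBot.coe_le_coe.mp hti

theorem dilation_eq_greatest_conv_pos_general (N : ℕ) (f b : (Fin N → ℤ) → WithBot ℕ)
    (hB : {y : Fin N → ℤ | b y ≠ ⊥}.Finite)
    (x : Fin N → ℤ)
    (hx : x ∈ {x : Fin N → ℤ | f x ≠ ⊥} + {y : Fin N → ℤ | b y ≠ ⊥}) :
    ∃ n : ℕ, (⨆ y : Fin N → ℤ, f (x - y) + b y) = (n : WithBot ℕ) ∧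
      IsGreatest {t : ℕ | 1 ≤ conv (umbra f) (umbra b) (x, (t : ℤ))} n := by
  obtain ⟨xF, hxF, xB, hxB, rfl⟩ := hx
  have hg : {y | f (xF + xB - y) + b y ≠ ⊥}.Finite :=
    hB.subset fun y hy hby => hy (by simp [hby])
  have hne : ∃ y, f (xF + xB - y) + b y ≠ ⊥ := ⟨xB, by simp_all⟩
  obtain ⟨n, hsup, hgreatest⟩ := WithBot.exists_iSup_eq_natCast_isGreatest hg hne
  refine ⟨n, hsup, ?_⟩
  simpa only [conv_umbra_eq_finsum, one_le_finsum_umbra_iff hg] using hgreatest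

/-- For every `x` in the Minkowski sum `F + B` of the supports of `f` and `b`, the
dilation value `(f ⊕ b)(x) = ⨆ y, f (x - y) + b y` is the greatest natural number `t`
such that `(u_f ⋆ u_b)(x, t) ≥ 1`. -/
theorem dilation_eq_greatest_conv_pos (N : ℕ) (f b : (Fin N → ℤ) → WithBot ℕ)
    (hF : {x : Fin N → ℤ | f x ≠ ⊥}.Finite) (hB : {y : Fin N → ℤ | b y ≠ ⊥}.Finite)
    (x : Fin N → ℤ)
    (hx : x ∈ {x : Fin N → ℤ | f x ≠ ⊥} + {y : Fin N → ℤ | b y ≠ ⊥}) :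
    ∃ n : ℕ, (⨆ y : Fin N → ℤ, f (x - y) + b y) = (n : WithBot ℕ) ∧
      IsGreatest {t : ℕ | 1 ≤ conv (umbra f) (umbra b) (x, (t : ℤ))} n :=
  dilation_eq_greatest_conv_pos_general N f b hB x hx
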